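/- arXiv:math/0511622 — 5 statements merged into one kernel-verified Lean document; each statement's English description precedes it below -/
import Mathlib

section
/- Let f be a holomorphic function defined on a neighborhood of 0 in ℂ with f(0) = 0, and suppose f'(0) = λ is a primitive m-th root of unity. Then either f^[m](z) = z for all z in a neighborhood of 0, or there exist a positive integer r and a nonzero complex number a such that f^[m](z) = z + a·z^{rm+1} + o(|z|^{rm+1}) as z → 0; in particular, all terms of the power series of f^[m](z) − z of degrees from 2 to rm vanish. -/
open Asymptotics Filter

/-- If `f` is holomorphic near `0 ∈ ℂ`, `f 0 = 0` and `f'(0) = λ` is a primitive `m`-th root of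
unity, then either `f^[m] = id` near `0`, or there are `r ≥ 1` and `a ≠ 0` with
`f^[m] z = z + a z^(rm+1) + o(|z|^(rm+1))` as `z → 0` (in particular all terms of the power
series of `f^[m] z − z` of degrees from `2` to `rm` vanish). -/
theorem one_dim_iteration_formula (m : ℕ) (hm : 0 < m) (lam : ℂ)
    (hroot : lam ^ m = 1) (hprim : ∀ j : ℕ, 0 < j → j < m → lam ^ j ≠ 1)
    (f : ℂ → ℂ) (U : Set ℂ) (hU : IsOpen U) (h0U : (0 : ℂ) ∈ U)
    (hf : DifferentiableOn ℂ f U) (hf0 : f 0 = 0) (hdf : deriv f 0 = lam) :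
    (∀ᶠ z in nhds (0 : ℂ), f^[m] z = z) ∨
      ∃ (r : ℕ) (a : ℂ), 0 < r ∧ a ≠ 0 ∧
        (fun z => f^[m] z - z - a * z ^ (r * m + 1))
          =o[nhds (0 : ℂ)] (fun z => ‖z‖ ^ (r * m + 1)) := by
  have hfa : AnalyticAt ℂ f 0 := hf.analyticAt (hU.mem_nhds h0U)
  have hFfix : ∀ k : ℕ, f^[k] 0 = 0 := fun k => Function.iterate_fixed hf0 k
  have hFa : ∀ k : ℕ, AnalyticAt ℂ (f^[k]) 0 := by
    intro k; induction k with
    | zero => exact analyticAt_id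
    | succ k ih =>
      rw [Function.iterate_succ']
      have hfa' : AnalyticAt ℂ f (f^[k] 0) := by rw [hFfix k]; exact hfa
      exact hfa'.comp ih
  have hfd : HasDerivAt f lam 0 := by
    have := hfa.differentiableAt.hasDerivAt; rwa [hdf] at this
  have hFd : HasDerivAt (f^[m]) (1 : ℂ) 0 := by
    have := hfd.iterate _ hf0 m; rwa [hroot] at this
  have hga : AnalyticAt ℂ (fun z => f^[m] z - z) 0 := (hFa m).sub analyticAt_id
  rcases eq_or_ne (analyticOrderAt (fun z => f^[m] z - z) 0) ⊤ with htop | hne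
  · left
    filter_upwards [analyticOrderAt_eq_top.mp htop] with z hz
    exact sub_eq_zero.mp hz
  · right
    obtain ⟨n, hn⟩ := Option.ne_none_iff_exists'.mp hne
    obtain ⟨h, hha, hh0, hfac⟩ := (hga.analyticOrderAt_eq_natCast (n := n)).mp hn
    simp only [sub_zero, smul_eq_mul] at hfac
    -- hfac : ∀ᶠ z in 𝓝 0, f^[m] z - z = z ^ n * h z
    set a : ℂ := h 0 with ha
    -- n ≠ 0
    have hn0 : n ≠ 0 := by
      intro h0
      have := hfac.self_of_nhds
      rw [h0, pow_zero, one_mul, hFfix m, sub_zero] at this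
      exact hh0 this.symm
    -- n ≠ 1
    have hn1 : n ≠ 1 := by
      intro h1
      have hh' : HasDerivAt h (deriv h 0) 0 := hha.differentiableAt.hasDerivAt
      have hd1 : HasDerivAt (fun z : ℂ => z ^ n * h z) a 0 := by
        have := (hasDerivAt_id (0 : ℂ)).mul hh'
        subst h1
        simp only [pow_one]
        exact this.congr_deriv (by simp [ha])
      have hd2 : HasDerivAt (fun z : ℂ => f^[m] z - z) a 0 :=
        hd1.congr_of_eventuallyEq hfac
      have hd3 : HasDerivAt (fun z : ℂ => f^[m] z - z) (0 : ℂ) 0 := by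
        exact (hFd.sub (hasDerivAt_id 0)).congr_deriv (by simp)
      exact hh0 (hd2.unique hd3)
    have hn2 : 2 ≤ n := by omega
    -- the factor u with f z = z * u z
    obtain ⟨p, hp⟩ := id hfa
    set u : ℂ → ℂ := dslope f 0 with hu
    have hua : AnalyticAt ℂ u 0 := ⟨p.fslope, hp.has_fpower_series_dslope_fslope⟩
    have hu0 : u 0 = lam := by rw [hu, dslope_same, hdf]
    have hfu : ∀ z : ℂ, f z = z * u z := by
      intro z
      have := sub_smul_dslope f 0 z
      simp only [sub_zero, smul_eq_mul, hf0] at this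
      exact this.symm
    -- Lipschitz bound for u near 0
    obtain ⟨K, t, ht, hlip⟩ :=
      (hua.contDiffAt (n := 1)).exists_lipschitzOnWith (𝕂 := ℂ)
    -- continuity facts
    have hfc : ContinuousAt f 0 := hfa.continuousAt
    have hFc : ContinuousAt (f^[m]) 0 := (hFa m).continuousAt
    have hftend : Tendsto f (nhds 0) (nhds 0) := by
      have := hfc.tendsto; rwa [hf0] at this
    have hFtend : Tendsto (f^[m]) (nhds 0) (nhds 0) := by
      have := hFc.tendsto; rwa [hFfix m] at this
    -- the key function
    set φ : ℂ → ℂ := fun z => (u z) ^ n * h (f z) - h z * u (f^[m] z) with hφ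
    have hkey : ∀ᶠ z in nhds (0 : ℂ), z ^ n * φ z = z * (u (f^[m] z) - u z) := by
      filter_upwards [hfac, hftend.eventually hfac] with z e1 e2
      have hfz : f z = z * u z := hfu z
      have hfFz : f (f^[m] z) = f^[m] z * u (f^[m] z) := hfu _
      have hc : f^[m] (f z) = f (f^[m] z) := by
        rw [← Function.iterate_succ_apply, Function.iterate_succ_apply']
      have hpow : (f z) ^ n = z ^ n * (u z) ^ n := by rw [hfz, mul_pow]
      rw [hφ]
      linear_combination (-(h (f z))) * hpow - e2 + hc + hfFz + u (f^[m] z) * e1 - hfz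
    -- bound on h near 0
    have hhc : ContinuousAt h 0 := hha.continuousAt
    have hCb : ∀ᶠ z in nhds (0 : ℂ), ‖h z‖ ≤ ‖a‖ + 1 := by
      have h1 : Tendsto (fun z => ‖h z‖) (nhds 0) (nhds ‖a‖) := hhc.norm.tendsto
      have h2 : {x : ℝ | x ≤ ‖a‖ + 1} ∈ nhds ‖a‖ := by
        apply mem_of_superset (Metric.ball_mem_nhds _ (by norm_num : (0:ℝ) < 1))
        intro x hx
        simp only [Metric.mem_ball, Real.dist_eq] at hx
        have := abs_lt.mp hx
        simp only [Set.mem_setOf_eq]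
        linarith [this.2]
      exact h1.eventually h2
    -- eventual bound for φ on punctured nhds
    have hbound : ∀ᶠ z in nhdsWithin (0 : ℂ) {0}ᶜ,
        ‖φ z‖ ≤ K * (‖a‖ + 1) * ‖z‖ := by
      have hm1 : ∀ᶠ z in nhds (0 : ℂ), z ∈ t := by exact ht
      have hmem : ∀ᶠ z in nhds (0 : ℂ), z ∈ t ∧ f^[m] z ∈ t :=
        hm1.and (hFtend.eventually hm1)
      have hmem' : ∀ᶠ z in nhds (0 : ℂ), z ∈ t := by
        filter_upwards [hmem] with z hz using hz.1
      filter_upwards [eventually_nhdsWithin_of_eventually_nhds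
        (hkey.and (hfac.and (hCb.and hmem))), self_mem_nhdsWithin]
        with z hz hz0
      obtain ⟨e1, e2, e3, hzt, hFzt⟩ := hz
      have hz0' : z ≠ 0 := hz0
      have hd : ‖u (f^[m] z) - u z‖ ≤ K * ‖f^[m] z - z‖ := by
        have := hlip.dist_le_mul _ hFzt _ hzt
        rwa [dist_eq_norm, dist_eq_norm] at this
      have hzn : (0 : ℝ) < ‖z‖ ^ n :=
        pow_pos (norm_pos_iff.mpr hz0') n
      have hchain : ‖z‖ ^ n * ‖φ z‖ ≤ ‖z‖ ^ n * (K * (‖a‖ + 1) * ‖z‖) := by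
        calc ‖z‖ ^ n * ‖φ z‖ = ‖z ^ n * φ z‖ := by
              rw [norm_mul, norm_pow]
          _ = ‖z‖ * ‖u (f^[m] z) - u z‖ := by rw [e1, norm_mul]
          _ ≤ ‖z‖ * (K * ‖f^[m] z - z‖) := by
              gcongr
          _ = ‖z‖ * (K * (‖z‖ ^ n * ‖h z‖)) := by
              rw [e2, norm_mul, norm_pow]
          _ ≤ ‖z‖ * (K * (‖z‖ ^ n * (‖a‖ + 1))) := by
              have hK : (0 : ℝ) ≤ K := K.coe_nonneg
              gcongr
          _ = ‖z‖ ^ n * (K * (‖a‖ + 1) * ‖z‖) := by ring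
      exact le_of_mul_le_mul_left hchain hzn
    -- φ tends to 0 along punctured nhds
    have hφ0 : Tendsto φ (nhdsWithin (0 : ℂ) {0}ᶜ) (nhds 0) := by
      apply squeeze_zero_norm' hbound
      have : Tendsto (fun z : ℂ => K * (‖a‖ + 1) * ‖z‖)
          (nhds (0 : ℂ)) (nhds (K * (‖a‖ + 1) * ‖(0 : ℂ)‖)) :=
        (tendsto_const_nhds.mul (continuous_norm.tendsto _))
      simpa using this.mono_left nhdsWithin_le_nhds
    -- φ continuous at 0 with value lam^n * a - a * lam
    have hφcont : Tendsto φ (nhds (0 : ℂ)) (nhds (lam ^ n * a - a * lam)) := by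
      have tu : Tendsto u (nhds (0 : ℂ)) (nhds lam) := by
        have := hua.continuousAt.tendsto; rwa [hu0] at this
      have th : Tendsto h (nhds (0 : ℂ)) (nhds a) := hhc.tendsto
      have thf : Tendsto (fun z => h (f z)) (nhds (0 : ℂ)) (nhds a) :=
        th.comp hftend
      have tuF : Tendsto (fun z => u (f^[m] z)) (nhds (0 : ℂ)) (nhds lam) :=
        tu.comp hFtend
      exact ((tu.pow n).mul thf).sub (th.mul tuF)
    have hres : lam ^ n * a - a * lam = 0 :=
      tendsto_nhds_unique (hφcont.mono_left nhdsWithin_le_nhds) hφ0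
    -- deduce lam ^ (n-1) = 1 and m ∣ n - 1
    have hlam0 : lam ≠ 0 := by
      intro h0
      rw [h0, zero_pow hm.ne'] at hroot
      exact zero_ne_one hroot
    have hpow1 : lam ^ (n - 1) = 1 := by
      have hnn : n - 1 + 1 = n := by omega
      have : lam ^ (n - 1) * lam = 1 * lam := by
        rw [← pow_succ, hnn, one_mul]
        have := sub_eq_zero.mp hres
        exact mul_left_cancel₀ hh0 (by linear_combination this)
      exact mul_right_cancel₀ hlam0 this
    have hmod : (n - 1) % m = 0 := by
      by_contra hs
      have hlt : (n - 1) % m < m := Nat.mod_lt _ hm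
      have hpos : 0 < (n - 1) % m := Nat.pos_of_ne_zero hs
      apply hprim _ hpos hlt
      calc lam ^ ((n - 1) % m)
          = (lam ^ m) ^ ((n - 1) / m) * lam ^ ((n - 1) % m) := by
            rw [hroot, one_pow, one_mul]
        _ = lam ^ (m * ((n - 1) / m) + (n - 1) % m) := by
            rw [pow_add, pow_mul]
        _ = lam ^ (n - 1) := by rw [Nat.div_add_mod]
        _ = 1 := hpow1
    set r : ℕ := (n - 1) / m with hr
    have hrm : r * m = n - 1 := by
      rw [hr, Nat.div_mul_cancel (Nat.dvd_of_mod_eq_zero hmod)]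
    have hrpos : 0 < r := by
      rcases Nat.eq_zero_or_pos r with h0 | h0
      · rw [h0, zero_mul] at hrm; omega
      · exact h0
    have hrn : r * m + 1 = n := by omega
    refine ⟨r, a, hrpos, hh0, ?_⟩
    rw [hrn]
    have heq : (fun z : ℂ => f^[m] z - z - a * z ^ n)
        =ᶠ[nhds (0 : ℂ)] (fun z => z ^ n * (h z - a)) := by
      filter_upwards [hfac] with z hz
      rw [hz]; ring
    refine heq.trans_isLittleO ?_
    have h1 : (fun z : ℂ => z ^ n) =O[nhds (0 : ℂ)] (fun z => ‖z‖ ^ n) := by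
      apply isBigO_of_le
      intro z
      simp [norm_pow]
    have h2 : (fun z : ℂ => h z - a) =o[nhds (0 : ℂ)] (fun _ => (1 : ℝ)) := by
      rw [isLittleO_one_iff]
      have := hhc.tendsto.sub_const a
      simpa [← ha] using this
    simpa using h1.mul_isLittleO h2
end

section
/- Let F : Δⁿ → ℂⁿ be a holomorphic map on an open ball Δⁿ ⊆ ℂⁿ centered at the origin with F(0) = 0, and suppose the Fréchet derivative F'(0) is invertible. Then there exist a positive number T₀ and ε > 0 with B(0,ε) ⊆ Δⁿ such that the system ż = F(z) has no periodic orbit in B(0,ε) \ {0} of period less than T₀; that is, every nonconstant differentiable curve γ : ℝ → ℂⁿ with γ(t) ∈ B(0,ε) \ {0} for all t, γ'(t) = F(γ(t)) for all t, and γ(t + p) = γ(t) for all t for some real p > 0, satisfies p ≥ T₀. -/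
open Asymptotics Filter

set_option maxHeartbeats 1000000 in
set_option synthInstance.maxHeartbeats 400000 in
/-- If `F` is holomorphic on a ball `Δⁿ ⊆ ℂⁿ` around `0` with `F 0 = 0` and invertible
Jacobian `F'(0)`, then there exist `T₀ > 0` and `ε > 0` with `B(0,ε) ⊆ Δⁿ` such that the
system `ż = F z` has no periodic orbit in `B(0,ε) \ {0}` of period less than `T₀`. -/
theorem no_small_periods_of_invertible_jacobian (n : ℕ) (hn : 0 < n) (R : ℝ) (hR : 0 < R)
    (F : EuclideanSpace ℂ (Fin n) → EuclideanSpace ℂ (Fin n))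
    (hF : DifferentiableOn ℂ F (Metric.ball 0 R)) (hF0 : F 0 = 0)
    (hinv : IsUnit (fderiv ℂ F 0)) :
    ∃ T₀ > 0, ∃ ε > 0, Metric.ball (0 : EuclideanSpace ℂ (Fin n)) ε ⊆ Metric.ball 0 R ∧
      ∀ (γ : ℝ → EuclideanSpace ℂ (Fin n)) (p : ℝ), 0 < p →
        (∀ t, γ t ∈ Metric.ball (0 : EuclideanSpace ℂ (Fin n)) ε \ {0}) →
        (∀ t, HasDerivAt γ (F (γ t)) t) →
        (∀ t, γ (t + p) = γ t) →
        (∃ t₁ t₂, γ t₁ ≠ γ t₂) →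
        T₀ ≤ p := by
  classical
  -- the derivative at 0 and its inverse
  have h0mem : (0 : (EuclideanSpace ℂ (Fin n))) ∈ Metric.ball (0 : (EuclideanSpace ℂ (Fin n))) R := Metric.mem_ball_self hR
  have hdiff0 : DifferentiableAt ℂ F 0 :=
    hF.differentiableAt (Metric.isOpen_ball.mem_nhds h0mem)
  set A := fderiv ℂ F 0 with hA
  have hFd : HasFDerivAt F A 0 := hdiff0.hasFDerivAt
  obtain ⟨B, hBA⟩ : ∃ B : (EuclideanSpace ℂ (Fin n)) →L[ℂ] (EuclideanSpace ℂ (Fin n)), ∀ z, B (A z) = z := by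
    obtain ⟨u, hu⟩ := hinv
    refine ⟨↑u⁻¹, fun z => ?_⟩
    rw [← hu, ← ContinuousLinearMap.mul_apply, u.inv_mul, ContinuousLinearMap.one_apply]
  have hBnz : B ≠ 0 := by
    intro h
    have hv : (EuclideanSpace.single (⟨0, hn⟩ : Fin n) (1 : ℂ)) = 0 := by
      rw [← hBA (EuclideanSpace.single ⟨0, hn⟩ 1), h, ContinuousLinearMap.zero_apply]
    have h2 := EuclideanSpace.norm_single (𝕜 := ℂ) (⟨0, hn⟩ : Fin n) (1 : ℂ)
    rw [hv] at h2
    simp at h2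
  have hB : 0 < ‖B‖ := by
    rcases (norm_nonneg B).lt_or_eq with h | h
    · exact h
    · exact absurd (norm_eq_zero.mp h.symm) hBnz
  set c : ℝ := ‖B‖⁻¹ with hc
  have hcpos : 0 < c := inv_pos.2 hB
  have hAz : ∀ z : (EuclideanSpace ℂ (Fin n)), c * ‖z‖ ≤ ‖A z‖ := by
    intro z
    have h1 : ‖B (A z)‖ ≤ ‖B‖ * ‖A z‖ := B.le_opNorm (A z)
    rw [hBA z] at h1
    calc c * ‖z‖ ≤ c * (‖B‖ * ‖A z‖) := mul_le_mul_of_nonneg_left h1 hcpos.le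
      _ = ‖A z‖ := by rw [hc, ← mul_assoc, inv_mul_cancel₀ hB.ne', one_mul]
  -- littleo : lower bound ‖F z‖ ≥ (c/2) ‖z‖ near 0
  have ho := hFd.isLittleO
  simp only [hF0, sub_zero] at ho
  have ho2 := ho.def (show (0:ℝ) < c / 2 by positivity)
  rw [Metric.eventually_nhds_iff] at ho2
  obtain ⟨δ₁, hδ₁pos, hδ₁⟩ := ho2
  have hFlow : ∀ z : (EuclideanSpace ℂ (Fin n)), ‖z‖ < δ₁ → c / 2 * ‖z‖ ≤ ‖F z‖ := by
    intro z hz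
    have h1 := hAz z
    have h2 : ‖F z - A z‖ ≤ c / 2 * ‖z‖ := hδ₁ (by simpa [dist_zero_right] using hz)
    have h3 : ‖A z‖ ≤ ‖F z‖ + ‖F z - A z‖ := by
      calc ‖A z‖ = ‖F z - (F z - A z)‖ := by congr 1; abel
        _ ≤ ‖F z‖ + ‖F z - A z‖ := norm_sub_le _ _
    linarith
  -- Lipschitz bound via Schwarz lemma along complex lines
  obtain ⟨M₀, hM₀⟩ := (isCompact_closedBall (0 : (EuclideanSpace ℂ (Fin n))) (3 * R / 4)).exists_bound_of_continuousOn
    (hF.continuousOn.mono (Metric.closedBall_subset_ball (by linarith)))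
  set M : ℝ := max M₀ 0 with hM
  have hMnonneg : 0 ≤ M := le_max_right _ _
  have hMb : ∀ z ∈ Metric.closedBall (0 : (EuclideanSpace ℂ (Fin n))) (3 * R / 4), ‖F z‖ ≤ M :=
    fun z hz => (hM₀ z hz).trans (le_max_left _ _)
  set L : ℝ := 2 * (2 * M + 1) / R with hL
  have hLpos : 0 < L := by positivity
  have hlip : ∀ x ∈ Metric.ball (0 : (EuclideanSpace ℂ (Fin n))) (R / 4), ∀ y ∈ Metric.ball (0 : (EuclideanSpace ℂ (Fin n))) (R / 4),
      ‖F y - F x‖ ≤ L * ‖y - x‖ := by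
    intro x hx y hy
    rcases eq_or_ne y x with rfl | hne
    · simp [hLpos.le]
    have hyx : 0 < ‖y - x‖ := by
      rcases (norm_nonneg (y - x)).lt_or_eq with h | h
      · exact h
      · exact absurd (sub_eq_zero.mp (norm_eq_zero.mp h.symm)) hne
    set ρ : ℝ := (R / 2) / ‖y - x‖ with hρ
    have hρpos : 0 < ρ := by positivity
    set g : ℂ → (EuclideanSpace ℂ (Fin n)) := fun lam => F (x + lam • (y - x)) with hg
    have hmapsIn : ∀ lam : ℂ, lam ∈ Metric.ball (0:ℂ) ρ →
        (x + lam • (y - x)) ∈ Metric.ball (0 : (EuclideanSpace ℂ (Fin n))) (3 * R / 4) := by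
      intro lam hlam
      rw [Metric.mem_ball, dist_zero_right] at hlam ⊢
      have hxn : ‖x‖ < R / 4 := by simpa [Metric.mem_ball, dist_zero_right] using hx
      have : ‖lam • (y - x)‖ = ‖lam‖ * ‖y - x‖ := norm_smul _ _
      have h2 : ‖lam‖ * ‖y - x‖ < R / 2 := by
        calc ‖lam‖ * ‖y - x‖ < ρ * ‖y - x‖ := mul_lt_mul_of_pos_right hlam hyx
          _ = R / 2 := by rw [hρ]; field_simp
      calc ‖x + lam • (y - x)‖ ≤ ‖x‖ + ‖lam • (y - x)‖ := norm_add_le _ _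
        _ < R / 4 + R / 2 := by rw [this]; linarith
        _ ≤ 3 * R / 4 := by linarith
    have hinner : Differentiable ℂ (fun lam : ℂ => x + lam • (y - x)) := by
      have := (differentiable_id.smul_const (y - x) : Differentiable ℂ fun lam : ℂ => lam • (y - x))
      exact this.const_add x
    have hgd : DifferentiableOn ℂ g (Metric.ball (0:ℂ) ρ) :=
      hF.comp hinner.differentiableOn
        (fun lam hlam => Metric.ball_subset_ball (by linarith) (hmapsIn lam hlam))
    have hg0 : g 0 = F x := by simp [hg]
    have hmaps : Set.MapsTo g (Metric.ball (0:ℂ) ρ) (Metric.ball (g 0) (2 * M + 1)) := by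
      intro lam hlam
      rw [Metric.mem_ball, dist_eq_norm, hg0]
      have h1 : ‖g lam‖ ≤ M :=
        hMb _ (Metric.ball_subset_closedBall (hmapsIn lam hlam))
      have h2 : ‖F x‖ ≤ M := by
        apply hMb
        exact Metric.ball_subset_closedBall
          (Metric.ball_subset_ball (by linarith) hx)
      calc ‖g lam - F x‖ ≤ ‖g lam‖ + ‖F x‖ := norm_sub_le _ _
        _ ≤ 2 * M + 1 - 1 := by linarith
        _ < 2 * M + 1 := by linarith
    have h1mem : (1 : ℂ) ∈ Metric.ball (0:ℂ) ρ := by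
      rw [Metric.mem_ball, dist_zero_right, norm_one, hρ]
      rw [lt_div_iff₀ hyx, one_mul]
      have hxn : ‖x‖ < R / 4 := by simpa [Metric.mem_ball, dist_zero_right] using hx
      have hyn : ‖y‖ < R / 4 := by simpa [Metric.mem_ball, dist_zero_right] using hy
      calc ‖y - x‖ ≤ ‖y‖ + ‖x‖ := norm_sub_le _ _
        _ < R / 2 := by linarith
    have := Complex.dist_le_div_mul_dist_of_mapsTo_ball hgd (hmaps.mono_right Metric.ball_subset_closedBall) h1mem
    rw [hg0] at this
    have hg1 : g 1 = F y := by simp [hg]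
    rw [hg1] at this
    have hd10 : dist (1:ℂ) 0 = 1 := by simp
    rw [hd10, mul_one, dist_eq_norm] at this
    calc ‖F y - F x‖ ≤ (2 * M + 1) / ρ := this
      _ = L * ‖y - x‖ := by rw [hρ, hL]; field_simp
  have hFle : ∀ z ∈ Metric.ball (0 : (EuclideanSpace ℂ (Fin n))) (R / 4), ‖F z‖ ≤ L * ‖z‖ := by
    intro z hz
    have := hlip 0 (Metric.mem_ball_self (by linarith)) z hz
    simpa [hF0] using this
  -- choose the constants
  set ε : ℝ := min δ₁ (R / 4) with hε
  have hεpos : 0 < ε := lt_min hδ₁pos (by linarith)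
  have hεδ : ε ≤ δ₁ := min_le_left _ _
  have hεR4 : ε ≤ R / 4 := min_le_right _ _
  refine ⟨c / (2 * L ^ 2), by positivity, ε, hεpos,
    Metric.ball_subset_ball (by linarith), ?_⟩
  intro γ p hp hmem hderiv hper _
  have hγball : ∀ t, γ t ∈ Metric.ball (0 : (EuclideanSpace ℂ (Fin n))) ε := fun t => (hmem t).1
  have hγne : ∀ t, γ t ≠ 0 := fun t => (hmem t).2
  have hγR4 : ∀ t, γ t ∈ Metric.ball (0 : (EuclideanSpace ℂ (Fin n))) (R / 4) :=
    fun t => Metric.ball_subset_ball hεR4 (hγball t)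
  have hγc : Continuous γ := continuous_iff_continuousAt.2 fun t => (hderiv t).continuousAt
  -- max of ‖γ‖ on a period
  obtain ⟨t₀, ht₀mem, ht₀max⟩ := (isCompact_Icc (a := (0:ℝ)) (b := p)).exists_isMaxOn
    (Set.nonempty_Icc.2 hp.le) ((continuous_norm.comp hγc).continuousOn)
  have hz₀pos : 0 < ‖γ t₀‖ := by
    rcases (norm_nonneg (γ t₀)).lt_or_eq with h | h
    · exact h
    · exact absurd (norm_eq_zero.mp h.symm) (hγne t₀)
  have hmax' : ∀ t ∈ Set.Icc t₀ (t₀ + p), ‖γ t‖ ≤ ‖γ t₀‖ := by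
    intro t ht
    by_cases h : t ≤ p
    · exact ht₀max ⟨le_trans ht₀mem.1 ht.1, h⟩
    · push_neg at h
      have hγt : γ t = γ (t - p) := by
        conv_lhs => rw [show t = (t - p) + p by ring, hper]
      rw [hγt]
      refine ht₀max ⟨by linarith, ?_⟩
      have := ht.2
      have := ht₀mem.2
      linarith
  -- integral machinery
  have hFγc : Continuous fun t => F (γ t) :=
    hF.continuousOn.comp_continuous hγc
      (fun t => Metric.ball_subset_ball (by linarith) (hγR4 t))
  have key : ∀ a b : ℝ, (∫ t in a..b, F (γ t)) = γ b - γ a := fun a b =>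
    intervalIntegral.integral_eq_sub_of_hasDerivAt (fun t _ => hderiv t)
      (hFγc.intervalIntegrable a b)
  have h2 : ∀ t ∈ Set.Icc t₀ (t₀ + p), ‖γ t - γ t₀‖ ≤ L * ‖γ t₀‖ * p := by
    intro t ht
    have hb : ‖∫ s in t₀..t, F (γ s)‖ ≤ (L * ‖γ t₀‖) * |t - t₀| := by
      apply intervalIntegral.norm_integral_le_of_norm_le_const
      intro s hs
      rw [Set.uIoc_of_le ht.1] at hs
      have hsIcc : s ∈ Set.Icc t₀ (t₀ + p) := ⟨hs.1.le, hs.2.trans ht.2⟩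
      calc ‖F (γ s)‖ ≤ L * ‖γ s‖ := hFle _ (hγR4 s)
        _ ≤ L * ‖γ t₀‖ := mul_le_mul_of_nonneg_left (hmax' s hsIcc) hLpos.le
    rw [key t₀ t] at hb
    have habs : |t - t₀| ≤ p := by
      rw [abs_of_nonneg (by linarith [ht.1])]
      linarith [ht.2]
    calc ‖γ t - γ t₀‖ ≤ (L * ‖γ t₀‖) * |t - t₀| := hb
      _ ≤ (L * ‖γ t₀‖) * p := by
          apply mul_le_mul_of_nonneg_left habs
          positivity
      _ = L * ‖γ t₀‖ * p := rfl
  -- the period integral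
  have hzero : (∫ t in t₀..t₀ + p, F (γ t)) = 0 := by
    rw [key, hper t₀, sub_self]
  have hsplit : (∫ t in t₀..t₀ + p, (F (γ t₀) - F (γ t))) = p • F (γ t₀) := by
    rw [intervalIntegral.integral_sub intervalIntegrable_const
      (hFγc.intervalIntegrable _ _), hzero, sub_zero, intervalIntegral.integral_const]
    congr 1
    ring
  have hb3 : ‖∫ t in t₀..t₀ + p, (F (γ t₀) - F (γ t))‖ ≤
      (L * (L * ‖γ t₀‖ * p)) * |t₀ + p - t₀| := by
    apply intervalIntegral.norm_integral_le_of_norm_le_const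
    intro s hs
    rw [Set.uIoc_of_le (by linarith)] at hs
    have hsIcc : s ∈ Set.Icc t₀ (t₀ + p) := ⟨hs.1.le, hs.2⟩
    calc ‖F (γ t₀) - F (γ s)‖ ≤ L * ‖γ t₀ - γ s‖ := hlip _ (hγR4 s) _ (hγR4 t₀)
      _ = L * ‖γ s - γ t₀‖ := by rw [norm_sub_rev]
      _ ≤ L * (L * ‖γ t₀‖ * p) := mul_le_mul_of_nonneg_left (h2 s hsIcc) hLpos.le
  rw [hsplit] at hb3
  have habs2 : |t₀ + p - t₀| = p := by
    rw [show t₀ + p - t₀ = p by ring, abs_of_pos hp]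
  rw [habs2] at hb3
  have hnorm_smul : ‖p • F (γ t₀)‖ = p * ‖F (γ t₀)‖ := by
    rw [norm_smul, Real.norm_eq_abs, abs_of_pos hp]
  rw [hnorm_smul] at hb3
  -- lower bound on ‖F (γ t₀)‖
  have hlow : c / 2 * ‖γ t₀‖ ≤ ‖F (γ t₀)‖ := by
    apply hFlow
    have := hγball t₀
    rw [Metric.mem_ball, dist_zero_right] at this
    linarith [hεδ]
  -- conclude
  rw [div_le_iff₀ (by positivity)]
  nlinarith [mul_le_mul_of_nonneg_left hlow hp.le, hz₀pos, hp, hLpos,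
    mul_pos hz₀pos hp]
end

section
/- Let m and n be positive integers and let λ ∈ ℂ satisfy λ^m = 1. Let g be a holomorphic map defined on a neighborhood of 0 in ℂⁿ with g(x) = λx + o(‖x‖^m) as x → 0. Then the m-th iterate of g satisfies g^[m](x) = x + o(‖x‖^m) as x → 0. -/
open Asymptotics Filter

/-- If `λ^m = 1` and `g` is holomorphic near `0 ∈ ℂⁿ` with `g x = λ x + o(‖x‖^m)` as `x → 0`,
then the `m`-th iterate satisfies `g^[m] x = x + o(‖x‖^m)` as `x → 0`. -/
theorem iterate_of_normal_form (m n : ℕ) (hm : 0 < m) (hn : 0 < n) (lam : ℂ)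
    (hroot : lam ^ m = 1)
    (g : EuclideanSpace ℂ (Fin n) → EuclideanSpace ℂ (Fin n))
    (U : Set (EuclideanSpace ℂ (Fin n))) (hU : IsOpen U) (h0U : 0 ∈ U)
    (hg : DifferentiableOn ℂ g U) (hg0 : g 0 = 0)
    (ho : (fun x => g x - lam • x)
      =o[nhds (0 : EuclideanSpace ℂ (Fin n))] (fun x => ‖x‖ ^ m)) :
    (fun x => g^[m] x - x) =o[nhds (0 : EuclideanSpace ℂ (Fin n))] (fun x => ‖x‖ ^ m) := by
  have hpow : Tendsto (fun x : EuclideanSpace ℂ (Fin n) => ‖x‖ ^ m) (nhds 0) (nhds 0) := by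
    have h := ((continuous_norm.tendsto (0 : EuclideanSpace ℂ (Fin n))).pow m)
    simpa [zero_pow hm.ne'] using h
  have hOm : (fun x : EuclideanSpace ℂ (Fin n) => ‖x‖ ^ m)
      =O[nhds (0 : EuclideanSpace ℂ (Fin n))] (fun x => x) := by
    rw [isBigO_iff]
    refine ⟨1, ?_⟩
    have hball : Metric.ball (0 : EuclideanSpace ℂ (Fin n)) 1 ∈
        nhds (0 : EuclideanSpace ℂ (Fin n)) := Metric.ball_mem_nhds 0 one_pos
    filter_upwards [hball] with x hx
    have hx1 : ‖x‖ < 1 := by simpa using hx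
    have : ‖x‖ ^ m ≤ ‖x‖ ^ 1 :=
      pow_le_pow_of_le_one (norm_nonneg x) hx1.le hm
    simpa [abs_of_nonneg (pow_nonneg (norm_nonneg x) m)] using this
  have key : ∀ k, (fun x => g^[k] x - lam ^ k • x)
      =o[nhds (0 : EuclideanSpace ℂ (Fin n))] (fun x => ‖x‖ ^ m) := by
    intro k
    induction k with
    | zero =>
      have hz : (fun x : EuclideanSpace ℂ (Fin n) => g^[0] x - lam ^ 0 • x) = fun _ => 0 := by
        funext x; simp
      rw [hz]; exact isLittleO_zero _ _
    | succ k ih =>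
      have htend : Tendsto g^[k] (nhds 0) (nhds (0 : EuclideanSpace ℂ (Fin n))) := by
        have h1 : Tendsto (fun x => g^[k] x - lam ^ k • x) (nhds 0)
            (nhds (0 : EuclideanSpace ℂ (Fin n))) := ih.isBigO.trans_tendsto hpow
        have h2 : Tendsto (fun x : EuclideanSpace ℂ (Fin n) => lam ^ k • x) (nhds 0)
            (nhds (0 : EuclideanSpace ℂ (Fin n))) := by
          simpa using ((continuous_const_smul (lam ^ k)).tendsto
            (0 : EuclideanSpace ℂ (Fin n)))
        have := h1.add h2
        simpa using this
      have hO : (fun x => g^[k] x) =O[nhds (0 : EuclideanSpace ℂ (Fin n))] (fun x => x) := by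
        have h1 : (fun x => g^[k] x - lam ^ k • x)
            =O[nhds (0 : EuclideanSpace ℂ (Fin n))] (fun x => x) :=
          ih.isBigO.trans hOm
        have h2 : (fun x : EuclideanSpace ℂ (Fin n) => lam ^ k • x)
            =O[nhds (0 : EuclideanSpace ℂ (Fin n))] (fun x => x) :=
          (isBigO_refl (fun x : EuclideanSpace ℂ (Fin n) => x) (nhds 0)).const_smul_left (lam ^ k)
        have := h1.add h2
        simpa using this
      have hOpow : (fun x => ‖g^[k] x‖ ^ m)
          =O[nhds (0 : EuclideanSpace ℂ (Fin n))] (fun x => ‖x‖ ^ m) :=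
        hO.norm_norm.pow m
      have hcomp : (fun x => g (g^[k] x) - lam • g^[k] x)
          =o[nhds (0 : EuclideanSpace ℂ (Fin n))] (fun x => ‖x‖ ^ m) :=
        (ho.comp_tendsto htend).trans_isBigO hOpow
      have hsum := hcomp.add (ih.const_smul_left lam)
      have heq : (fun x => g^[k + 1] x - lam ^ (k + 1) • x) =
          fun x => (g (g^[k] x) - lam • g^[k] x) + lam • (g^[k] x - lam ^ k • x) := by
        funext x
        rw [Function.iterate_succ_apply']
        rw [pow_succ]
        rw [smul_sub, smul_smul, mul_comm]
        abel
      rw [heq]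
      exact hsum
  have := key m
  simpa [hroot] using this
end

section
/- Let m and n be positive integers. Let h : U → V be a biholomorphic map between open neighborhoods of 0 in ℂⁿ with h(0) = 0 and h'(0) = I, and let g be a holomorphic map defined on a neighborhood of 0 in ℂⁿ with g(x) = x + o(‖x‖^m) as x → 0. Then the conjugated map h ∘ g ∘ h⁻¹, defined on a neighborhood of 0, satisfies (h ∘ g ∘ h⁻¹)(z) = z + o(‖z‖^m) as z → 0. -/
open Asymptotics Filter

/-- If `h` is a biholomorphic map between neighborhoods of `0 ∈ ℂⁿ` with `h 0 = 0` and
`h'(0) = I`, and `g` is holomorphic near `0` with `g x = x + o(‖x‖^m)` as `x → 0`, then the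
conjugate `h ∘ g ∘ h⁻¹` satisfies `(h ∘ g ∘ h⁻¹) z = z + o(‖z‖^m)` as `z → 0`. -/
theorem conjugation_preserves_little_o (m n : ℕ) (hm : 0 < m) (hn : 0 < n)
    (U V : Set (EuclideanSpace ℂ (Fin n))) (hU : IsOpen U) (hV : IsOpen V)
    (h0U : 0 ∈ U) (h0V : 0 ∈ V)
    (h hinv : EuclideanSpace ℂ (Fin n) → EuclideanSpace ℂ (Fin n))
    (hhol : DifferentiableOn ℂ h U) (hinvhol : DifferentiableOn ℂ hinv V)
    (hmaps : Set.MapsTo h U V) (hinvmaps : Set.MapsTo hinv V U)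
    (hli : ∀ x ∈ U, hinv (h x) = x) (hri : ∀ z ∈ V, h (hinv z) = z)
    (hh0 : h 0 = 0)
    (hdh : fderiv ℂ h 0 = ContinuousLinearMap.id ℂ (EuclideanSpace ℂ (Fin n)))
    (g : EuclideanSpace ℂ (Fin n) → EuclideanSpace ℂ (Fin n))
    (W : Set (EuclideanSpace ℂ (Fin n))) (hW : IsOpen W) (h0W : 0 ∈ W)
    (hg : DifferentiableOn ℂ g W) (hg0 : g 0 = 0)
    (ho : (fun x => g x - x) =o[nhds (0 : EuclideanSpace ℂ (Fin n))] (fun x => ‖x‖ ^ m)) :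
    (fun z => h (g (hinv z)) - z)
      =o[nhds (0 : EuclideanSpace ℂ (Fin n))] (fun z => ‖z‖ ^ m) := by
  -- basic facts
  have hinv0 : hinv 0 = 0 := by
    have := hli 0 h0U; rwa [hh0] at this
  have hinvdiff : DifferentiableAt ℂ hinv 0 :=
    hinvhol.differentiableAt (hV.mem_nhds h0V)
  have hinvcont : Tendsto hinv (nhds (0 : EuclideanSpace ℂ (Fin n)))
      (nhds (0 : EuclideanSpace ℂ (Fin n))) := by
    simpa [hinv0] using hinvdiff.continuousAt.tendsto
  have hgdiff : DifferentiableAt ℂ g 0 := hg.differentiableAt (hW.mem_nhds h0W)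
  have hgcont : Tendsto g (nhds (0 : EuclideanSpace ℂ (Fin n)))
      (nhds (0 : EuclideanSpace ℂ (Fin n))) := by
    simpa [hg0] using hgdiff.continuousAt.tendsto
  -- a closed ball inside U
  obtain ⟨R, hRpos, hRU⟩ :
      ∃ R > 0, Metric.closedBall (0 : EuclideanSpace ℂ (Fin n)) R ⊆ U := by
    rcases Metric.mem_nhds_iff.1 (hU.mem_nhds h0U) with ⟨ε, hε, hsub⟩
    exact ⟨ε / 2, by positivity,
      (Metric.closedBall_subset_ball (by linarith)).trans hsub⟩
  obtain ⟨M, hM⟩ := (isCompact_closedBall (0 : EuclideanSpace ℂ (Fin n))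
    R).exists_bound_of_continuousOn (hhol.continuousOn.mono hRU)
  have hMnonneg : 0 ≤ M :=
    le_trans (norm_nonneg _) (hM 0 (Metric.mem_closedBall_self hRpos.le))
  set r : ℝ := R / 2 with hrdef
  have hrpos : 0 < r := by positivity
  have hrR : r ≤ R := by rw [hrdef]; linarith
  -- Cauchy estimate: bound on fderiv of h on the small ball
  have hfderiv_bound : ∀ x ∈ Metric.ball (0 : EuclideanSpace ℂ (Fin n)) r,
      ‖fderiv ℂ h x‖ ≤ M / r := by
    intro x hx
    have hxU : x ∈ U :=
      hRU (Metric.mem_closedBall.2 (le_trans (Metric.mem_ball.1 hx).le hrR))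
    refine ContinuousLinearMap.opNorm_le_bound _ (by positivity) fun v => ?_
    rcases eq_or_ne v 0 with rfl | hv
    · simp
    have hvpos : 0 < ‖v‖ := norm_pos_iff.2 hv
    set ρ : ℝ := r / ‖v‖ with hρ
    have hρpos : 0 < ρ := by positivity
    set f : ℂ → EuclideanSpace ℂ (Fin n) := fun t => h (x + t • v) with hf
    have hxn : ‖x‖ < r := by simpa using hx
    have hmem : ∀ t : ℂ, ‖t‖ ≤ ρ →
        x + t • v ∈ Metric.closedBall (0 : EuclideanSpace ℂ (Fin n)) R := by
      intro t ht
      have h1 : ‖x + t • v‖ ≤ ‖x‖ + ‖t‖ * ‖v‖ := by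
        simpa [norm_smul] using norm_add_le x (t • v)
      have h2 : ‖t‖ * ‖v‖ ≤ r := by
        calc ‖t‖ * ‖v‖ ≤ ρ * ‖v‖ := by gcongr
          _ = r := by rw [hρ, div_mul_cancel₀ _ hvpos.ne']
      simp only [Metric.mem_closedBall, dist_zero_right]
      have hrr : r + r = R := by rw [hrdef]; ring
      linarith
    have hcdiff : Differentiable ℂ (fun t : ℂ => x + t • v) :=
      (differentiable_id.smul_const v).const_add x
    have hdiffcl : DifferentiableOn ℂ f (Metric.closedBall (0 : ℂ) ρ) :=
      hhol.comp hcdiff.differentiableOn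
        (fun t ht => hRU (hmem t (by simpa using ht)))
    have hdc : DiffContOnCl ℂ f (Metric.ball (0 : ℂ) ρ) :=
      DifferentiableOn.diffContOnCl (by rwa [closure_ball (0 : ℂ) hρpos.ne'])
    have hbdd : ∀ t ∈ Metric.sphere (0 : ℂ) ρ, ‖f t‖ ≤ M := by
      intro t ht
      have htρ : ‖t‖ = ρ := by simpa using ht
      exact hM _ (hmem t htρ.le)
    have hderiv : HasDerivAt f (fderiv ℂ h x v) 0 := by
      have h1 : HasFDerivAt h (fderiv ℂ h x) ((fun t : ℂ => x + t • v) 0) := by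
        simpa using (hhol.differentiableAt (hU.mem_nhds hxU)).hasFDerivAt
      have h2 : HasDerivAt (fun t : ℂ => x + t • v) v 0 := by
        simpa using ((hasDerivAt_id (0 : ℂ)).smul_const v).const_add x
      exact h1.comp_hasDerivAt 0 h2
    have hkey : ‖deriv f 0‖ ≤ M / ρ :=
      Complex.norm_deriv_le_of_forall_mem_sphere_norm_le hρpos hdc hbdd
    rw [hderiv.deriv] at hkey
    calc ‖fderiv ℂ h x v‖ ≤ M / ρ := hkey
      _ = M / r * ‖v‖ := by rw [hρ]; field_simp [hvpos.ne']
  -- h is Lipschitz near 0, as a big-O statement on pairs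
  have hpair : (fun p : EuclideanSpace ℂ (Fin n) × EuclideanSpace ℂ (Fin n) =>
      h p.1 - h p.2) =O[nhds ((0 : EuclideanSpace ℂ (Fin n)),
        (0 : EuclideanSpace ℂ (Fin n)))] fun p => p.1 - p.2 := by
    refine IsBigO.of_bound (M / r) ?_
    have hmem : Metric.ball (0 : EuclideanSpace ℂ (Fin n)) r ×ˢ
        Metric.ball (0 : EuclideanSpace ℂ (Fin n)) r ∈
        nhds (((0 : EuclideanSpace ℂ (Fin n)),
          (0 : EuclideanSpace ℂ (Fin n)))) :=
      prod_mem_nhds (Metric.ball_mem_nhds _ hrpos) (Metric.ball_mem_nhds _ hrpos)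
    filter_upwards [hmem] with p hp
    exact (convex_ball (0 : EuclideanSpace ℂ (Fin n)) r).norm_image_sub_le_of_norm_fderiv_le
      (fun y hy => hhol.differentiableAt (hU.mem_nhds
        (hRU (Metric.mem_closedBall.2 (le_trans (Metric.mem_ball.1 hy).le hrR)))))
      hfderiv_bound hp.2 hp.1
  -- assemble
  have htend : Tendsto (fun z => (g (hinv z), hinv z))
      (nhds (0 : EuclideanSpace ℂ (Fin n)))
      (nhds (((0 : EuclideanSpace ℂ (Fin n)), (0 : EuclideanSpace ℂ (Fin n))))) :=
    (hgcont.comp hinvcont).prodMk_nhds hinvcont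
  have h1 : (fun z => h (g (hinv z)) - h (hinv z))
      =O[nhds (0 : EuclideanSpace ℂ (Fin n))]
      fun z => g (hinv z) - hinv z := hpair.comp_tendsto htend
  have h2 : (fun z => g (hinv z) - hinv z)
      =o[nhds (0 : EuclideanSpace ℂ (Fin n))]
      fun z => ‖hinv z‖ ^ m := ho.comp_tendsto hinvcont
  have hO : (fun z => hinv z) =O[nhds (0 : EuclideanSpace ℂ (Fin n))]
      fun z => z := by
    simpa [hinv0] using hinvdiff.isBigO_sub
  have h3 : (fun z => ‖hinv z‖ ^ m) =O[nhds (0 : EuclideanSpace ℂ (Fin n))]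
      fun z => ‖z‖ ^ m := hO.norm_norm.pow m
  have key : (fun z => h (g (hinv z)) - h (hinv z))
      =o[nhds (0 : EuclideanSpace ℂ (Fin n))]
      fun z => ‖z‖ ^ m := h1.trans_isLittleO (h2.trans_isBigO h3)
  refine key.congr' ?_ (EventuallyEq.refl _ _)
  filter_upwards [hV.mem_nhds h0V] with z hz
  rw [hri z hz]
end

section
/- Let s be a positive real number and let γ : [0, 1/s²) → ℂ² be the curve γ(t) = ( s·e^{it}, s·e^{−it}/(1 − t·s²) ), which is the solution of the system (ẋ, ẏ) = (ix, −iy + x·y²) with initial condition (s, s). Then ‖γ(t)‖ → ∞ as t → (1/s²)⁻; in particular γ is unbounded and cannot be extended to a periodic solution, so the origin is not a center of this system: every ball around the origin contains points through which the orbit is not periodic. -/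
open Asymptotics Filter

/-- For `s > 0`, the solution `γ t = (s e^{it}, s e^{−it}/(1 − t s²))` of the system
`(ẋ, ẏ) = (i x, −i y + x y²)` with initial condition `(s, s)` blows up: `‖γ t‖ → ∞` as
`t → (1/s²)⁻`. In particular `γ` is unbounded and the origin is not a center. -/
theorem solution_blows_up (s : ℝ) (hs : 0 < s)
    (γ : ℝ → ℂ × ℂ)
    (hγ : ∀ t : ℝ, γ t = ((s : ℂ) * Complex.exp (Complex.I * t),
      (s : ℂ) * Complex.exp (-Complex.I * t) / (1 - (t : ℂ) * (s : ℂ) ^ 2))) :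
    Filter.Tendsto (fun t => ‖γ t‖)
      (nhdsWithin (1 / s ^ 2) (Set.Iio (1 / s ^ 2))) Filter.atTop := by
  have hs2 : 0 < s ^ 2 := by positivity
  set L := nhdsWithin (1 / s ^ 2) (Set.Iio (1 / s ^ 2)) with hL
  have key : ∀ t : ℝ, t ∈ Set.Iio (1 / s ^ 2) → t * s ^ 2 < 1 := by
    intro t ht
    have h1 : t < (s ^ 2)⁻¹ := by simpa [one_div] using ht
    have := mul_lt_mul_of_pos_right h1 hs2
    rwa [inv_mul_cancel₀ hs2.ne'] at this
  -- denominator tends to 0 from the right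
  have hden : Tendsto (fun t : ℝ => 1 - t * s ^ 2) L (nhdsWithin 0 (Set.Ioi 0)) := by
    apply tendsto_nhdsWithin_of_tendsto_nhds_of_eventually_within
    · have : Tendsto (fun t : ℝ => 1 - t * s ^ 2) (nhds (1 / s ^ 2)) (nhds 0) := by
        have := ((tendsto_id (x := nhds (1 / s ^ 2))).mul_const (s ^ 2)).const_sub 1
        simpa [one_div, inv_mul_cancel₀ hs2.ne'] using this
      exact this.mono_left nhdsWithin_le_nhds
    · filter_upwards [self_mem_nhdsWithin] with t ht
      have := key t ht
      simp only [Set.mem_Ioi]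
      linarith
  have hinv : Tendsto (fun t : ℝ => (1 - t * s ^ 2)⁻¹) L atTop :=
    hden.inv_tendsto_nhdsGT_zero
  have hmul : Tendsto (fun t : ℝ => s * (1 - t * s ^ 2)⁻¹) L atTop :=
    hinv.const_mul_atTop hs
  apply tendsto_atTop_mono' L ?_ hmul
  filter_upwards [self_mem_nhdsWithin] with t ht
  have hpos : 0 < 1 - t * s ^ 2 := by have := key t ht; linarith
  have hnorm2 : ‖(γ t).2‖ = s * (1 - t * s ^ 2)⁻¹ := by
    rw [hγ t]
    have hcast : (1 : ℂ) - (t : ℂ) * (s : ℂ) ^ 2 = ((1 - t * s ^ 2 : ℝ) : ℂ) := by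
      push_cast; ring
    have hexp : ‖Complex.exp (-Complex.I * t)‖ = 1 := by
      rw [Complex.norm_exp]
      simp
    rw [norm_div, norm_mul, hexp, hcast, Complex.norm_real, Complex.norm_real,
      Real.norm_of_nonneg hs.le, Real.norm_of_nonneg hpos.le, mul_one, div_eq_mul_inv]
  calc s * (1 - t * s ^ 2)⁻¹ = ‖(γ t).2‖ := hnorm2.symm
    _ ≤ ‖γ t‖ := norm_snd_le _
end
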